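/- Let 𝒫 = { P : {1,2,3}³ → ℝ : P_{ijk} = P_{jik} for all i,j,k and Σ_i P_{iik} = 0 for all k }, and for L₁, L₂, L₃ ∈ ℝ define f(P) = (L₁/2) Σ_{i,j,k} P_{ijk}² + (L₂/2) Σ_{i,j,k} P_{ikj} P_{ijk} + (L₃/2) Σ_{i,j,k} P_{ijj} P_{ikk}. Then there exists μ₀ > 0 such that f(P) ≥ μ₀ Σ_{i,j,k} P_{ijk}² for every P ∈ 𝒫 if and only if L₁ + L₂ > 0, 2L₁ − L₂ > 0, and L₁ + L₂/6 + (5/3)L₃ > 0. -/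

import Mathlib

/-!
`𝒫 ≅ 𝒮₀ ⊗ ℝ³` splits under `SO(3)` into irreducible pieces of dimensions 7, 5 and 3: the
fully symmetric traceless part of `P`, the symmetric part of its curl, and its divergence.
Each of the three invariants `Σ P²`, `Σ P_{ikj} P_{ijk}`, `Σ P_{ijj} P_{ikk}` is a combination
of the squared norms of these pieces, so `f` is diagonal with eigenvalues `(L₁ + L₂)/2`,
`(2L₁ − L₂)/4` and `(L₁ + L₂/6 + 5L₃/3)/2`; `f` is coercive iff all three are positive, and
a test tensor from each piece shows necessity.
-/

open Finset

noncomputable section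

namespace LandauDeGennes

variable (P : Fin 3 → Fin 3 → Fin 3 → ℝ)

def sqNorm : ℝ := ∑ i : Fin 3, ∑ j : Fin 3, ∑ k : Fin 3, (P i j k)^2

def twist : ℝ := ∑ i : Fin 3, ∑ j : Fin 3, ∑ k : Fin 3, P i k j * P i j k

def divSq : ℝ := ∑ i : Fin 3, ∑ j : Fin 3, ∑ k : Fin 3, P i j j * P i k k

def energy (L1 L2 L3 : ℝ) : ℝ := (L1/2) * sqNorm P + (L2/2) * twist P + (L3/2) * divSq P

def IsCoercive (L1 L2 L3 μ : ℝ) : Prop :=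
  ∀ P : Fin 3 → Fin 3 → Fin 3 → ℝ,
    (∀ i j k : Fin 3, P i j k = P j i k) → (∀ k : Fin 3, ∑ i : Fin 3, P i i k = 0) →
    μ * sqNorm P ≤ energy P L1 L2 L3

def divergence (i : Fin 3) : ℝ := ∑ j, P i j j

def curl (i : Fin 3) : Fin 3 → ℝ := ![P i 1 2 - P i 2 1, P i 2 0 - P i 0 2, P i 0 1 - P i 1 0]

def symTracelessPart (i j k : Fin 3) : ℝ :=
  (P i j k + P j k i + P k i j) / 3 - 2 / 15 *
    ((if i = j then divergence P k else 0) + (if j = k then divergence P i else 0) +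
      (if k = i then divergence P j else 0))

def symCurlSq : ℝ := ∑ i : Fin 3, ∑ l : Fin 3, ((curl P i l + curl P l i) / 2) ^ 2

theorem divSq_eq_sum_sq : divSq P = ∑ i, divergence P i ^ 2 := by
  simp only [divSq, divergence, sq, sum_mul_sum]

variable {P}

theorem apply_two_two_eq (htr : ∀ k, ∑ i, P i i k = 0) (k : Fin 3) :
    P 2 2 k = -P 0 0 k - P 1 1 k := by
  linear_combination (Fin.sum_univ_three (fun i => P i i k)).symm.trans (htr k)

theorem sqNorm_symTracelessPart (hsym : ∀ i j k, P i j k = P j i k)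
    (htr : ∀ k, ∑ i, P i i k = 0) :
    sqNorm (symTracelessPart P) = (sqNorm P + 2 * twist P) / 3 - 4 / 15 * divSq P := by
  have h22 := apply_two_two_eq htr
  simp only [sqNorm, twist, divSq, symTracelessPart, divergence, Fin.sum_univ_three,
    hsym 1 0, hsym 2 0, hsym 2 1, h22, Fin.isValue, Fin.reduceEq, ↓reduceIte]
  ring

theorem symCurlSq_eq (hsym : ∀ i j k, P i j k = P j i k)
    (htr : ∀ k, ∑ i, P i i k = 0) :
    symCurlSq P = sqNorm P - twist P - divSq P / 2 := by
  have h22 := apply_two_two_eq htr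
  simp only [sqNorm, twist, divSq, symCurlSq, curl, Fin.sum_univ_three,
    hsym 1 0, hsym 2 0, hsym 2 1, h22, Fin.isValue,
    Matrix.cons_val_zero, Matrix.cons_val_one, Matrix.cons_val]
  ring

theorem energy_sub_mul_sqNorm (L1 L2 L3 μ : ℝ) (hsym : ∀ i j k, P i j k = P j i k)
    (htr : ∀ k, ∑ i, P i i k = 0) :
    energy P L1 L2 L3 - μ * sqNorm P =
      ((L1 + L2) / 2 - μ) * sqNorm (symTracelessPart P) +
      ((2 * L1 - L2) / 4 - μ) * (2 / 3 * symCurlSq P) +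
      ((L1 + L2 / 6 + 5 / 3 * L3) / 2 - μ) * (3 / 5 * divSq P) := by
  rw [sqNorm_symTracelessPart hsym htr, symCurlSq_eq hsym htr, energy]
  ring

theorem isCoercive_of_le {L1 L2 L3 μ : ℝ} (h3 : μ ≤ (L1 + L2) / 2) (h2 : μ ≤ (2 * L1 - L2) / 4)
    (h1 : μ ≤ (L1 + L2 / 6 + 5 / 3 * L3) / 2) : IsCoercive L1 L2 L3 μ := by
  intro P hsym htr
  have hdecomp := energy_sub_mul_sqNorm L1 L2 L3 μ hsym htr
  have hS : 0 ≤ sqNorm (symTracelessPart P) := by unfold sqNorm; positivity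
  have hC : 0 ≤ symCurlSq P := by unfold symCurlSq; positivity
  have hD : 0 ≤ divSq P := by rw [divSq_eq_sum_sq]; positivity
  linarith [mul_nonneg (sub_nonneg.2 h3) hS, mul_nonneg (sub_nonneg.2 h2) hC,
    mul_nonneg (sub_nonneg.2 h1) hD]

-- fully symmetric and traceless: only the `symTracelessPart` survives
def octupolarTest : Fin 3 → Fin 3 → Fin 3 → ℝ :=
  ![![![0, 0, 0], ![0, 0, 1], ![0, 1, 0]],
    ![![0, 0, 1], ![0, 0, 0], ![1, 0, 0]],
    ![![0, 1, 0], ![1, 0, 0], ![0, 0, 0]]]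

-- divergence-free with `symTracelessPart` zero: only the symmetric curl survives
def quadrupolarTest : Fin 3 → Fin 3 → Fin 3 → ℝ :=
  ![![![0, 0, -2], ![0, 0, 0], ![1, 0, 0]],
    ![![0, 0, 0], ![0, 0, 2], ![0, -1, 0]],
    ![![1, 0, 0], ![0, -1, 0], ![0, 0, 0]]]

-- `3 (δᵢₖ uⱼ + δⱼₖ uᵢ) - 2 δᵢⱼ uₖ` for `u = e₀`: only the divergence survives
def dipolarTest : Fin 3 → Fin 3 → Fin 3 → ℝ :=
  ![![![4, 0, 0], ![0, 3, 0], ![0, 0, 3]],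
    ![![0, 3, 0], ![-2, 0, 0], ![0, 0, 0]],
    ![![0, 0, 3], ![0, 0, 0], ![-2, 0, 0]]]

theorem IsCoercive.le_octupolar {L1 L2 L3 μ : ℝ} (h : IsCoercive L1 L2 L3 μ) :
    μ ≤ (L1 + L2) / 2 := by
  have := h octupolarTest
    (fun i j k => congrFun (by fin_cases i <;> fin_cases j <;> rfl) k)
    (fun k => by fin_cases k <;> simp [octupolarTest, Fin.sum_univ_three])
  simp only [energy, sqNorm, twist, divSq, octupolarTest, Fin.sum_univ_three, Matrix.cons_val_zero,
    Matrix.cons_val_one, Matrix.cons_val_two, Matrix.tail_cons, Matrix.head_cons] at this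
  norm_num at this
  linarith

theorem IsCoercive.le_quadrupolar {L1 L2 L3 μ : ℝ} (h : IsCoercive L1 L2 L3 μ) :
    μ ≤ (2 * L1 - L2) / 4 := by
  have := h quadrupolarTest
    (fun i j k => congrFun (by fin_cases i <;> fin_cases j <;> rfl) k)
    (fun k => by fin_cases k <;> simp [quadrupolarTest, Fin.sum_univ_three])
  simp only [energy, sqNorm, twist, divSq, quadrupolarTest, Fin.sum_univ_three, Matrix.cons_val_zero,
    Matrix.cons_val_one, Matrix.cons_val_two, Matrix.tail_cons, Matrix.head_cons] at this
  norm_num at this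
  linarith

theorem IsCoercive.le_dipolar {L1 L2 L3 μ : ℝ} (h : IsCoercive L1 L2 L3 μ) :
    μ ≤ (L1 + L2 / 6 + 5 / 3 * L3) / 2 := by
  have := h dipolarTest
    (fun i j k => congrFun (by fin_cases i <;> fin_cases j <;> rfl) k)
    (fun k => by fin_cases k <;> simp [dipolarTest, Fin.sum_univ_three]; norm_num)
  simp only [energy, sqNorm, twist, divSq, dipolarTest, Fin.sum_univ_three, Matrix.cons_val_zero,
    Matrix.cons_val_one, Matrix.cons_val_two, Matrix.tail_cons, Matrix.head_cons] at this
  norm_num at this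
  linarith

end LandauDeGennes

end

open LandauDeGennes in
theorem elastic_coercivity_iff (L1 L2 L3 : ℝ) :
    (∃ μ0 : ℝ, 0 < μ0 ∧
      ∀ P : Fin 3 → Fin 3 → Fin 3 → ℝ,
        (∀ i j k : Fin 3, P i j k = P j i k) →
        (∀ k : Fin 3, ∑ i : Fin 3, P i i k = 0) →
        μ0 * (∑ i : Fin 3, ∑ j : Fin 3, ∑ k : Fin 3, (P i j k)^2) ≤
          (L1/2) * (∑ i : Fin 3, ∑ j : Fin 3, ∑ k : Fin 3, (P i j k)^2)
          + (L2/2) * (∑ i : Fin 3, ∑ j : Fin 3, ∑ k : Fin 3, P i k j * P i j k)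
          + (L3/2) * (∑ i : Fin 3, ∑ j : Fin 3, ∑ k : Fin 3, P i j j * P i k k)) ↔
    (0 < L1 + L2 ∧ 0 < 2 * L1 - L2 ∧ 0 < L1 + L2/6 + (5/3) * L3) := by
  change (∃ μ0, 0 < μ0 ∧ IsCoercive L1 L2 L3 μ0) ↔ _
  constructor
  · rintro ⟨μ, hμ, h⟩
    exact ⟨by linarith [h.le_octupolar], by linarith [h.le_quadrupolar],
      by linarith [h.le_dipolar]⟩
  · rintro ⟨h3, h2, h1⟩
    refine ⟨min (min ((L1 + L2) / 2) ((2 * L1 - L2) / 4)) ((L1 + L2 / 6 + 5 / 3 * L3) / 2),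
      lt_min (lt_min (by linarith) (by linarith)) (by linarith), isCoercive_of_le ?_ ?_ ?_⟩
    · exact (min_le_left _ _).trans (min_le_left _ _)
    · exact (min_le_left _ _).trans (min_le_right _ _)
    · exact min_le_right _ _
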